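/- arXiv:1910.08302 — 3 statements merged into one kernel-verified Lean document; each statement's English description precedes it below -/
import Mathlib

section
/- Let λ be a partition of n with conjugate λ', and let α be a set partition of {1,...,n} of type λ'. Then the subspace H_T = Σ_{τ∈T} V_λ^τ of V_λ is independent of the choice of the collection T of transpositions generating the Young subgroup S_α. -/
/-!
A functional `φ` on `V` kills the fixed space of a transposition `τ` iff `φ ∘ ρ τ = -φ`:
test `φ` on the fixed vectors `v + ρ τ v`, and conversely `φ w = φ (ρ τ w) = -φ w` for fixed `w`.
So the annihilator of `H_T = ⨆ τ ∈ T, V^τ` is the space of functionals on which every `τ ∈ T`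
acts by its sign in the dual representation, and this condition propagates to the group
generated by `T`. The annihilator of `H_T` thus depends only on `⟨T⟩ = S_α`, and a subspace
is determined by its annihilator.
-/

noncomputable section
open scoped Classical

/-- The Young subgroup of a set partition (modeled as a setoid on `Fin n`):
permutations preserving each block. -/
def youngSubgroup {n : ℕ} (s : Setoid (Fin n)) : Subgroup (Equiv.Perm (Fin n)) where
  carrier := {σ | ∀ x, s.r (σ x) x}
  one_mem' := fun x => s.iseqv.refl x
  mul_mem' := by
    intro a b ha hb x
    exact s.iseqv.trans (ha (b x)) (hb x)
  inv_mem' := by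
    intro a ha x
    have h := ha (a⁻¹ x)
    simp only [Equiv.Perm.coe_inv, Equiv.apply_symm_apply] at h
    exact s.iseqv.symm h

/-- The block of `x` in the set partition `s`. -/
def block {n : ℕ} (s : Setoid (Fin n)) (x : Fin n) : Finset (Fin n) :=
  Finset.univ.filter (fun y => s.r x y)

/-- The multiset of block sizes (the "type") of a set partition of `{1,…,n}`. -/
def blockSizes {n : ℕ} (s : Setoid (Fin n)) : Multiset ℕ :=
  (Finset.univ.image (fun x => block s x)).val.map Finset.card

/-- The Young diagram of an integer partition. -/
def diagramOf {n : ℕ} (lam : n.Partition) : YoungDiagram :=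
  YoungDiagram.ofRowLens (lam.parts.sort (· ≥ ·)) (List.Pairwise.sortedGE (lam.parts.pairwise_sort _))

/-- The multiset of parts of the conjugate (transposed) partition. -/
def conjParts {n : ℕ} (lam : n.Partition) : Multiset ℕ :=
  ((diagramOf lam).transpose.rowLens : List ℕ)

/-- The multiset of entries of a semistandard Young tableau. -/
def contentOf {γ : YoungDiagram} (T : SemistandardYoungTableau γ) : Multiset ℕ :=
  γ.cells.val.map (fun c => T c.1 c.2)

/-- The multiset of entries prescribed by a content `μ`: `μᵢ` copies of `i`
(entries are numbered from `0`, parts of `μ` taken in decreasing order). -/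
def muContent (μ : Multiset ℕ) : Multiset ℕ :=
  ↑(((μ.sort (· ≥ ·)).zipIdx.map (fun p => List.replicate p.1 p.2)).flatten)

/-- The Kostka number: the number of semistandard Young tableaux of shape `γ`
and content `μ`. -/
def kostka (γ : YoungDiagram) (μ : Multiset ℕ) : ℕ :=
  Nat.card {T : SemistandardYoungTableau γ // contentOf T = muContent μ}

/-- The subspace of vectors fixed by every element of `S`. -/
def fixedBy {G V : Type*} [Group G] [AddCommGroup V] [Module ℂ V]
    (ρ : Representation ℂ G V) (S : Set G) : Submodule ℂ V where
  carrier := {v | ∀ g ∈ S, ρ g v = v}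
  add_mem' := by
    intro a b ha hb g hg
    simp [map_add, ha g hg, hb g hg]
  zero_mem' := by intro g hg; simp
  smul_mem' := by
    intro c v hv g hg
    simp [hv g hg]

/-- The subspace of vectors on which each element of `S` acts as its sign. -/
def signEigen {n : ℕ} {V : Type*} [AddCommGroup V] [Module ℂ V]
    (ρ : Representation ℂ (Equiv.Perm (Fin n)) V) (S : Set (Equiv.Perm (Fin n))) :
    Submodule ℂ V where
  carrier := {v | ∀ g ∈ S, ρ g v = ((Equiv.Perm.sign g : ℤ) : ℂ) • v}
  add_mem' := by
    intro a b ha hb g hg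
    simp [map_add, ha g hg, hb g hg, smul_add]
  zero_mem' := by intro g hg; simp
  smul_mem' := by
    intro c v hv g hg
    rw [LinearMap.map_smul, hv g hg, smul_comm]

/-- Irreducibility of a representation: the space is nonzero and the only
invariant subspaces are `⊥` and `⊤`. -/
def IsIrrep {G V : Type*} [Group G] [AddCommGroup V] [Module ℂ V]
    (ρ : Representation ℂ G V) : Prop :=
  (∃ v : V, v ≠ 0) ∧
    ∀ U : Submodule ℂ V, (∀ g v, v ∈ U → ρ g v ∈ U) → U = ⊥ ∨ U = ⊤

/-- `ρ` is (a copy of) the irreducible representation `π_λ` of the symmetric group: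
it is irreducible, has a nonzero invariant vector for a Young subgroup of type `λ`,
and a nonzero sign-vector for a Young subgroup of type `λ'`
(the Frobenius–Young characterization). -/
def IsSpechtOfShape {V : Type*} [AddCommGroup V] [Module ℂ V] (n : ℕ) (lam : n.Partition)
    (ρ : Representation ℂ (Equiv.Perm (Fin n)) V) : Prop :=
  IsIrrep ρ ∧
    (∃ s : Setoid (Fin n), blockSizes s = lam.parts ∧
      fixedBy ρ (youngSubgroup s : Set (Equiv.Perm (Fin n))) ≠ ⊥) ∧
    (∃ s : Setoid (Fin n), blockSizes s = conjParts lam ∧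
      signEigen ρ (youngSubgroup s : Set (Equiv.Perm (Fin n))) ≠ ⊥)

theorem mem_fixedBy_singleton {G V : Type*} [Group G] [AddCommGroup V] [Module ℂ V]
    (ρ : Representation ℂ G V) {g : G} {v : V} : v ∈ fixedBy ρ {g} ↔ ρ g v = v := by
  simp [fixedBy]

section SymmetricGroup

variable {n : ℕ} {V : Type*} [AddCommGroup V] [Module ℂ V]
  (ρ : Representation ℂ (Equiv.Perm (Fin n)) V)

theorem mem_signEigen_singleton {g : Equiv.Perm (Fin n)} {v : V} :
    v ∈ signEigen ρ {g} ↔ ρ g v = ((Equiv.Perm.sign g : ℤ) : ℂ) • v := by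
  simp [signEigen]

theorem signEigen_eq_iInf (S : Set (Equiv.Perm (Fin n))) :
    signEigen ρ S = ⨅ g ∈ S, signEigen ρ {g} := by
  ext v
  simp [signEigen, Submodule.mem_iInf]

theorem signEigen_closure (S : Set (Equiv.Perm (Fin n))) :
    signEigen ρ (Subgroup.closure S) = signEigen ρ S := by
  refine le_antisymm (fun v hv g hg => hv g (Subgroup.subset_closure hg)) fun v hv g hg => ?_
  induction hg using Subgroup.closure_induction with
  | mem g hg => exact hv g hg
  | one => simp
  | mul g h _ _ hg hh =>
    rw [map_mul, Module.End.mul_apply, hh, map_smul, hg, smul_smul, map_mul, Units.val_mul,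
      Int.cast_mul, mul_comm]
  | inv g _ hg =>
    have hsq : ((Equiv.Perm.sign g : ℤ) : ℂ) * ((Equiv.Perm.sign g : ℤ) : ℂ) = 1 := by
      rw [← Int.cast_mul, ← Units.val_mul, Int.units_mul_self, Units.val_one, Int.cast_one]
    calc ρ g⁻¹ v = ρ g⁻¹ (((Equiv.Perm.sign g : ℤ) : ℂ) • ρ g v) := by
          rw [hg, smul_smul, hsq, one_smul]
      _ = ((Equiv.Perm.sign g⁻¹ : ℤ) : ℂ) • v := by
          rw [map_smul, ← Module.End.mul_apply, ← map_mul, inv_mul_cancel, map_one,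
            Module.End.one_apply, Equiv.Perm.sign_inv]

theorem apply_apply_of_isSwap {τ : Equiv.Perm (Fin n)} (hτ : τ.IsSwap) (v : V) :
    ρ τ (ρ τ v) = v := by
  obtain ⟨a, b, -, rfl⟩ := hτ
  rw [← Module.End.mul_apply, ← map_mul, Equiv.swap_mul_self, map_one, Module.End.one_apply]

theorem dualAnnihilator_fixedBy_of_isSwap {τ : Equiv.Perm (Fin n)} (hτ : τ.IsSwap) :
    (fixedBy ρ {τ}).dualAnnihilator = signEigen ρ.dual {τ} := by
  obtain ⟨a, b, hab, rfl⟩ := id hτ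
  ext φ
  simp only [Submodule.mem_dualAnnihilator, mem_signEigen_singleton, mem_fixedBy_singleton,
    Representation.dual_apply, Equiv.swap_inv, Equiv.Perm.sign_swap hab, Units.val_neg,
    Units.val_one, Int.cast_neg, Int.cast_one, neg_smul, one_smul, LinearMap.ext_iff,
    Module.Dual.transpose_apply, LinearMap.coe_comp, Function.comp_apply, LinearMap.neg_apply]
  constructor
  · intro h v
    have hfix : ρ (Equiv.swap a b) (v + ρ (Equiv.swap a b) v) = v + ρ (Equiv.swap a b) v := by
      rw [map_add, apply_apply_of_isSwap ρ hτ, add_comm]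
    have := h _ hfix
    rw [map_add] at this
    linear_combination this
  · intro h w hw
    have := h w
    rw [hw] at this
    linear_combination this / 2

theorem dualAnnihilator_iSup_fixedBy_of_isSwap (T : Set (Equiv.Perm (Fin n)))
    (hT : ∀ τ ∈ T, τ.IsSwap) :
    (⨆ τ ∈ T, fixedBy ρ {τ}).dualAnnihilator = signEigen ρ.dual (Subgroup.closure T) := by
  rw [signEigen_closure, signEigen_eq_iInf]
  simp only [Submodule.dualAnnihilator_iSup_eq]
  exact iInf_congr fun τ => iInf_congr fun hτ => dualAnnihilator_fixedBy_of_isSwap ρ (hT τ hτ)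

end SymmetricGroup

theorem sup_fixed_independent_of_generating_transpositions_general
    {n : ℕ} {V : Type*} [AddCommGroup V] [Module ℂ V]
    (ρ : Representation ℂ (Equiv.Perm (Fin n)) V)
    (s : Setoid (Fin n))
    (T₁ T₂ : Set (Equiv.Perm (Fin n)))
    (hT₁ : ∀ τ ∈ T₁, Equiv.Perm.IsSwap τ) (hT₂ : ∀ τ ∈ T₂, Equiv.Perm.IsSwap τ)
    (hgen₁ : Subgroup.closure T₁ = youngSubgroup s)
    (hgen₂ : Subgroup.closure T₂ = youngSubgroup s) :
    (⨆ τ ∈ T₁, fixedBy ρ {τ} : Submodule ℂ V) = ⨆ τ ∈ T₂, fixedBy ρ {τ} := by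
  rw [← Subspace.dualAnnihilator_inj, dualAnnihilator_iSup_fixedBy_of_isSwap ρ T₁ hT₁,
    dualAnnihilator_iSup_fixedBy_of_isSwap ρ T₂ hT₂, hgen₁, hgen₂]

/-- the subspace `H_T = Σ_{τ∈T} V_λ^τ` does not depend on the choice
of the collection `T` of transpositions generating the Young subgroup `S_s` of a
set partition `s` of type `λ'`. -/
theorem sup_fixed_independent_of_generating_transpositions
    {n : ℕ} {V : Type*} [AddCommGroup V] [Module ℂ V] [FiniteDimensional ℂ V]
    (lam : n.Partition) (ρ : Representation ℂ (Equiv.Perm (Fin n)) V)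
    (hρ : IsSpechtOfShape n lam ρ)
    (s : Setoid (Fin n)) (hs : blockSizes s = conjParts lam)
    (T₁ T₂ : Set (Equiv.Perm (Fin n)))
    (hT₁ : ∀ τ ∈ T₁, Equiv.Perm.IsSwap τ) (hT₂ : ∀ τ ∈ T₂, Equiv.Perm.IsSwap τ)
    (hgen₁ : Subgroup.closure T₁ = youngSubgroup s)
    (hgen₂ : Subgroup.closure T₂ = youngSubgroup s) :
    (⨆ τ ∈ T₁, fixedBy ρ {τ} : Submodule ℂ V) = ⨆ τ ∈ T₂, fixedBy ρ {τ} :=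
  sup_fixed_independent_of_generating_transpositions_general ρ s T₁ T₂ hT₁ hT₂ hgen₁ hgen₂
end
end

section
/- If z = Σ_{r=1}^m a_r I_r is a nonzero cycle (i.e., dz = 0) of dimension at least 2 in the simplicial chain complex of the full simplex on n vertices with complex coefficients, where the I_r are distinct simplices and all a_r ≠ 0, then m ≥ 4. -/
noncomputable section
open scoped Classical

/-- The simplicial boundary map on chains of the full simplex on `n` vertices:
a chain is recorded by its coefficient function on subsets of `{1,…,n}` (each
subset standing for the simplex with its vertices in increasing order), and
`(d c)(t) = Σ_{x ∉ t} (−1)^{#{y ∈ t | y < x}} c(insert x t)`. -/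
def simplicialBoundary (n : ℕ) (c : Finset (Fin n) → ℂ) : Finset (Fin n) → ℂ :=
  fun t => ∑ x ∈ tᶜ, (-1 : ℂ) ^ (t.filter (fun y => y < x)).card * c (insert x t)

lemma exists_other {n : ℕ} (c : Finset (Fin n) → ℂ)
    (hcycle : simplicialBoundary n c = 0)
    (s0 : Finset (Fin n)) (hs0 : c s0 ≠ 0) (x : Fin n) (hx : x ∈ s0) :
    ∃ y, y ∉ s0 ∧ c (insert y (s0.erase x)) ≠ 0 := by
  by_contra h
  push_neg at h
  set t := s0.erase x with ht
  have h0 : simplicialBoundary n c t = 0 := congrFun hcycle t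
  have hxt : x ∈ tᶜ := by simp [ht]
  have hsum : (∑ y ∈ tᶜ, (-1 : ℂ) ^ (t.filter (fun z => z < y)).card * c (insert y t))
      = (-1 : ℂ) ^ (t.filter (fun z => z < x)).card * c (insert x t) := by
    refine Finset.sum_eq_single_of_mem x hxt ?_
    intro y hy hyx
    have hyns0 : y ∉ s0 := by
      intro hys0
      have : y ∈ t := Finset.mem_erase.mpr ⟨hyx, hys0⟩
      exact (Finset.mem_compl.mp hy) this
    have := h y hyns0
    simp [this]
  have hins : insert x t = s0 := Finset.insert_erase hx
  rw [simplicialBoundary, hsum, hins] at h0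
  exact (mul_ne_zero (pow_ne_zero _ (by norm_num)) hs0) h0

/-- a nonzero cycle of dimension `k ≥ 2` in the chain complex of
the full simplex is supported on at least `4` simplices. -/
theorem cycle_support_ge_four {n k : ℕ} (hk : 2 ≤ k)
    (c : Finset (Fin n) → ℂ) (hc : c ≠ 0)
    (hsupp : ∀ s : Finset (Fin n), c s ≠ 0 → s.card = k + 1)
    (hcycle : simplicialBoundary n c = 0) :
    4 ≤ Nat.card {s : Finset (Fin n) // c s ≠ 0} := by
  obtain ⟨s0, hs0⟩ : ∃ s, c s ≠ 0 := by
    by_contra h; push_neg at h; exact hc (funext h)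
  have hcard0 : s0.card = k + 1 := hsupp s0 hs0
  have h3 : 3 ≤ s0.card := by omega
  obtain ⟨u, hu_sub, hu3⟩ := Finset.exists_subset_card_eq h3
  obtain ⟨x1, x2, x3, h12, h13, h23, hu⟩ := Finset.card_eq_three.mp hu3
  have hx1 : x1 ∈ s0 := hu_sub (by simp [hu])
  have hx2 : x2 ∈ s0 := hu_sub (by simp [hu])
  have hx3 : x3 ∈ s0 := hu_sub (by simp [hu])
  obtain ⟨y1, hy1, hc1⟩ := exists_other c hcycle s0 hs0 x1 hx1
  obtain ⟨y2, hy2, hc2⟩ := exists_other c hcycle s0 hs0 x2 hx2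
  obtain ⟨y3, hy3, hc3⟩ := exists_other c hcycle s0 hs0 x3 hx3
  set s1 := insert y1 (s0.erase x1) with hs1def
  set s2 := insert y2 (s0.erase x2) with hs2def
  set s3 := insert y3 (s0.erase x3) with hs3def
  -- each si ≠ s0
  have hne0 : ∀ (y x : Fin n), y ∉ s0 → insert y (s0.erase x) ≠ s0 := by
    intro y x hy hEq
    exact hy (hEq ▸ Finset.mem_insert_self y _)
  have h10 : s1 ≠ s0 := hne0 y1 x1 hy1
  have h20 : s2 ≠ s0 := hne0 y2 x2 hy2
  have h30 : s3 ≠ s0 := hne0 y3 x3 hy3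
  -- distinctness of si, sj for xi ≠ xj
  have key : ∀ (yi xi yj xj : Fin n), xi ∈ s0 → xj ∈ s0 → xi ≠ xj → yi ∉ s0 →
      c (insert yi (s0.erase xi)) ≠ 0 →
      insert yi (s0.erase xi) ≠ insert yj (s0.erase xj) := by
    intro yi xi yj xj hxi hxj hij hyi hci hEq
    have hsub : s0 ⊆ insert yi (s0.erase xi) := by
      intro z hz
      by_cases hzxi : z = xi
      · have : z ∈ s0.erase xj := Finset.mem_erase.mpr ⟨hzxi ▸ hij, hz⟩
        rw [hEq]; exact Finset.mem_insert_of_mem this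
      · exact Finset.mem_insert_of_mem (Finset.mem_erase.mpr ⟨hzxi, hz⟩)
    have hcardi : (insert yi (s0.erase xi)).card = k + 1 := hsupp _ hci
    have : s0 = insert yi (s0.erase xi) :=
      Finset.eq_of_subset_of_card_le hsub (by omega)
    exact hyi (this ▸ Finset.mem_insert_self yi _)
  have h12' : s1 ≠ s2 := key y1 x1 y2 x2 hx1 hx2 h12 hy1 hc1
  have h13' : s1 ≠ s3 := key y1 x1 y3 x3 hx1 hx3 h13 hy1 hc1
  have h23' : s2 ≠ s3 := key y2 x2 y3 x3 hx2 hx3 h23 hy2 hc2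
  have hTcard : ({s0, s1, s2, s3} : Finset (Finset (Fin n))).card = 4 := by
    rw [Finset.card_insert_of_notMem (by simp [h10.symm, h20.symm, h30.symm]),
        Finset.card_insert_of_notMem (by simp [h12', h13']),
        Finset.card_insert_of_notMem (by simp [h23']),
        Finset.card_singleton]
  have hsub : (↑({s0, s1, s2, s3} : Finset (Finset (Fin n))) : Set (Finset (Fin n)))
      ⊆ {s | c s ≠ 0} := by
    intro s hs
    simp only [Finset.coe_insert, Finset.coe_singleton, Set.mem_insert_iff,
      Set.mem_singleton_iff] at hs
    rcases hs with rfl | rfl | rfl | rfl <;> assumption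
  calc 4 = ({s0, s1, s2, s3} : Finset (Finset (Fin n))).card := hTcard.symm
    _ = (↑({s0, s1, s2, s3} : Finset (Finset (Fin n))) : Set (Finset (Fin n))).ncard :=
        (Set.ncard_coe_finset _).symm
    _ ≤ ({s | c s ≠ 0} : Set (Finset (Fin n))).ncard :=
        Set.ncard_le_ncard hsub (Set.toFinite _)
    _ = Nat.card {s : Finset (Fin n) // c s ≠ 0} := Nat.card_coe_set_eq _
end
end

section
/- For k ≥ 2, any ℂ-linear dependence Σ_r a_r (∂T)_{I_r} = 0 (as linear functionals of T ∈ Λ^k(ℂ^n)) among the coordinate functionals T ↦ (∂T)_I for distinct (k+1)-subsets I_1,…,I_m of {1,…,n} with all a_r ≠ 0 requires m ≥ 4. Consequently, any two distinct hyperplanes {T : (∂T)_I = 0} and {T : (∂T)_J = 0} intersect in codimension 2, and no third such hyperplane contains their intersection. -/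
noncomputable section
open scoped Classical

/-- `T` is a totally antisymmetric tensor of valence `k` on `ℂⁿ`
(function model of `Λᵏ(ℂⁿ)`). -/
def IsSkew (n k : ℕ) (T : (Fin k → Fin n) → ℂ) : Prop :=
  ∀ (v : Fin k → Fin n) (σ : Equiv.Perm (Fin k)),
    T (v ∘ σ) = ((Equiv.Perm.sign σ : ℤ) : ℂ) * T v

/-- The boundary-type map `∂ : Λᵏ(ℂⁿ) → Λᵏ⁺¹(ℂⁿ)`,
`(∂T)_{i₁…i_{k+1}} = Σ_j (−1)^{j+1} T_{i₁…î_j…i_{k+1}}` (indices `j` numbered from `0`). -/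
def bd (n k : ℕ) (T : (Fin k → Fin n) → ℂ) : (Fin (k + 1) → Fin n) → ℂ :=
  fun v => ∑ j : Fin (k + 1), (-1 : ℂ) ^ (j : ℕ) * T (v ∘ j.succAbove)

/-- The subspace of antisymmetric tensors `Λᵏ(ℂⁿ)` inside all tensors. -/
def skewSubmodule (n k : ℕ) : Submodule ℂ ((Fin k → Fin n) → ℂ) where
  carrier := {T | IsSkew n k T}
  add_mem' := by
    intro a b ha hb v σ
    have h1 := ha v σ
    have h2 := hb v σ
    simp only [Pi.add_apply, h1, h2]
    ring
  zero_mem' := by intro v σ; simp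
  smul_mem' := by
    intro c a ha v σ
    have h1 := ha v σ
    simp only [Pi.smul_apply, smul_eq_mul, h1]
    ring

/-- The coordinate functional `T ↦ (∂T)_I` for a `(k+1)`-subset `I` of `{1,…,n}`
written in increasing order. -/
def coordFn (n k : ℕ) (s : Finset (Fin n)) (h : s.card = k + 1) :
    ((Fin k → Fin n) → ℂ) →ₗ[ℂ] ℂ where
  toFun T := bd n k T (fun i => s.orderEmbOfFin h i)
  map_add' := by
    intro a b
    simp [bd, mul_add, Finset.sum_add_distrib]
  map_smul' := by
    intro c a
    simp only [bd, Pi.smul_apply, smul_eq_mul, RingHom.id_apply]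
    rw [Finset.mul_sum]
    exact Finset.sum_congr rfl fun j _ => by ring

/-! If `b ≠ I` are `(k+1)`-sets, `b` contains at most one `k`-element facet of `I`; so as long as
fewer than `k + 1` such sets `b` are given, some facet `J` of `I` lies in none of them. The
elementary tensor `e_J` then has `(∂e_J)_I = ±1` and `(∂e_J)_b = 0` for every given `b`, because
`(∂e_J)_b` vanishes unless `J ⊆ b`. This rules out short dependences among the functionals
`(∂·)_I`, and the separating tensors cut `Λᵏ` down one dimension at a time. -/

theorem Finset.exists_erase_not_subset {α : Type*} [DecidableEq α] {I : Finset α}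
    {B : Finset (Finset α)} (hcard : B.card < I.card) (hB : ∀ b ∈ B, ¬ I ⊆ b) :
    ∃ x ∈ I, ∀ b ∈ B, ¬ I.erase x ⊆ b := by
  by_contra! h
  choose! g hgB hg using h
  obtain ⟨x, hx, y, hy, hxy, hgxy⟩ :=
    Finset.exists_ne_map_eq_of_card_lt_of_maps_to hcard (f := g) hgB
  refine hB (g x) (hgB x hx) fun z hz => ?_
  by_cases hzx : z = x
  · subst hzx
    exact hgxy ▸ hg y hy (Finset.mem_erase.2 ⟨hxy, hz⟩)
  · exact hg x hx (Finset.mem_erase.2 ⟨hzx, hz⟩)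

theorem Submodule.finrank_inf_ker_add_one {K W : Type*} [DivisionRing K] [AddCommGroup W]
    [Module K W] [FiniteDimensional K W] {V : Submodule K W} {f : W →ₗ[K] K} {x : W}
    (hx : x ∈ V) (hfx : f x ≠ 0) :
    Module.finrank K ↥(V ⊓ LinearMap.ker f) + 1 = Module.finrank K V := by
  have hf : f ∘ₗ V.subtype ≠ 0 := fun h => hfx (LinearMap.congr_fun h ⟨x, hx⟩)
  have hker : LinearMap.ker (f ∘ₗ V.subtype) = (V ⊓ LinearMap.ker f).comap V.subtype := by
    ext w
    simp
  rw [← Module.Dual.finrank_ker_add_one_of_ne_zero hf, hker,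
    (Submodule.comapSubtypeEquivOfLe inf_le_left).finrank_eq]

namespace Skew

variable {n k : ℕ}

/-- The elementary alternating tensor `e_J = e_{j₁} ∧ ⋯ ∧ e_{j_k}` of a `k`-set `J`, whose
component at `v` is the determinant of the incidence matrix `[v i = j_l]`. -/
def elem (J : Finset (Fin n)) (hJ : J.card = k) : (Fin k → Fin n) → ℂ :=
  fun v => (Matrix.of fun i l : Fin k => if v i = J.orderEmbOfFin hJ l then (1 : ℂ) else 0).det

theorem elem_mem_skewSubmodule (J : Finset (Fin n)) (hJ : J.card = k) :
    elem J hJ ∈ skewSubmodule n k := by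
  intro v σ
  exact Matrix.det_permute σ
    (Matrix.of fun i l : Fin k => if v i = J.orderEmbOfFin hJ l then (1 : ℂ) else 0)

theorem elem_eq_one_of_strictMono (J : Finset (Fin n)) (hJ : J.card = k)
    {w : Fin k → Fin n} (hw : StrictMono w) (hwJ : ∀ i, w i ∈ J) : elem J hJ w = 1 := by
  obtain rfl : w = J.orderEmbOfFin hJ := Finset.orderEmbOfFin_unique hJ hwJ hw
  have : (Matrix.of fun i l : Fin k =>
      if J.orderEmbOfFin hJ i = J.orderEmbOfFin hJ l then (1 : ℂ) else 0) = 1 := by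
    ext i l
    simp [Matrix.one_apply]
  simp only [elem, this, Matrix.det_one]

theorem elem_eq_zero_of_not_subset_range (J : Finset (Fin n)) (hJ : J.card = k)
    {v : Fin k → Fin n} (h : ¬ (J : Set (Fin n)) ⊆ Set.range v) : elem J hJ v = 0 := by
  rw [← Finset.range_orderEmbOfFin J hJ, Set.range_subset_iff] at h
  push Not at h
  obtain ⟨l, hl⟩ := h
  refine Matrix.det_eq_zero_of_column_eq_zero l fun i => if_neg fun hi => hl ⟨i, hi⟩

theorem card_erase_orderEmbOfFin (I : Finset (Fin n)) (hI : I.card = k + 1) (j : Fin (k + 1)) :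
    (I.erase (I.orderEmbOfFin hI j)).card = k := by
  rw [Finset.card_erase_of_mem (I.orderEmbOfFin_mem hI j), hI, Nat.add_sub_cancel]

theorem coordFn_apply (I : Finset (Fin n)) (hI : I.card = k + 1) (T : (Fin k → Fin n) → ℂ) :
    coordFn n k I hI T
      = ∑ j : Fin (k + 1), (-1) ^ (j : ℕ) * T (I.orderEmbOfFin hI ∘ j.succAbove) :=
  rfl

theorem coordFn_elem_of_not_subset (I : Finset (Fin n)) (hI : I.card = k + 1)
    (J : Finset (Fin n)) (hJ : J.card = k) (h : ¬ J ⊆ I) :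
    coordFn n k I hI (elem J hJ) = 0 := by
  rw [coordFn_apply]
  refine Finset.sum_eq_zero fun j _ => ?_
  rw [elem_eq_zero_of_not_subset_range, mul_zero]
  rintro hJv
  refine h fun x hx => ?_
  obtain ⟨i, rfl⟩ := hJv hx
  exact I.orderEmbOfFin_mem hI _

theorem coordFn_elem_erase (I : Finset (Fin n)) (hI : I.card = k + 1) (j₀ : Fin (k + 1)) :
    coordFn n k I hI (elem (I.erase (I.orderEmbOfFin hI j₀)) (card_erase_orderEmbOfFin I hI j₀))
      = (-1) ^ (j₀ : ℕ) := by
  rw [coordFn_apply]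
  refine (Fintype.sum_eq_single j₀ fun j hj => ?_).trans ?_
  · -- the `j`-th vertex lies in the facet opposite `j₀` but not in the `j`-th face
    rw [elem_eq_zero_of_not_subset_range, mul_zero]
    intro hsub
    obtain ⟨i, hi⟩ := hsub (Finset.mem_coe.2 (Finset.mem_erase.2
      ⟨fun h => hj ((I.orderEmbOfFin hI).injective h), I.orderEmbOfFin_mem hI j⟩))
    exact Fin.succAbove_ne j i ((I.orderEmbOfFin hI).injective hi)
  · rw [elem_eq_one_of_strictMono _ _
      ((I.orderEmbOfFin hI).strictMono.comp (Fin.strictMono_succAbove j₀)) fun i => by simp [Fin.succAbove_ne], mul_one]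

theorem exists_mem_skewSubmodule_separating (I : Finset (Fin n)) (hI : I.card = k + 1)
    (B : Finset (Finset (Fin n))) (hB : B.card ≤ k) (hIB : I ∉ B) :
    ∃ T ∈ skewSubmodule n k, coordFn n k I hI T ≠ 0 ∧
      ∀ (b : Finset (Fin n)) (hb : b.card = k + 1), b ∈ B → coordFn n k b hb T = 0 := by
  set B' := B.filter (·.card = k + 1)
  have hB'I : ∀ b ∈ B', ¬ I ⊆ b := fun b hb hIb => by
    obtain ⟨hbB, hb⟩ := Finset.mem_filter.1 hb
    exact hIB (Finset.eq_of_subset_of_card_le hIb (by rw [hb, hI]) ▸ hbB)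
  obtain ⟨x, hx, hxB'⟩ := Finset.exists_erase_not_subset
    ((Finset.card_filter_le _ _).trans_lt (hI ▸ Nat.lt_succ_of_le hB)) hB'I
  obtain ⟨j₀, rfl⟩ : x ∈ Set.range (I.orderEmbOfFin hI) := by
    rwa [Finset.range_orderEmbOfFin]
  refine ⟨_, elem_mem_skewSubmodule _ (card_erase_orderEmbOfFin I hI j₀), ?_, fun b hb hbB => ?_⟩
  · rw [coordFn_elem_erase]
    exact pow_ne_zero _ (neg_ne_zero.2 one_ne_zero)
  · exact coordFn_elem_of_not_subset b hb _ _ (hxB' b (Finset.mem_filter.2 ⟨hbB, hb⟩))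

theorem add_two_le_of_sum_coordFn_eq_zero {m : ℕ} (a : Fin m → ℂ) (I : Fin m → Finset (Fin n))
    (hI : ∀ r, (I r).card = k + 1) (hinj : Function.Injective I) {r₀ : Fin m} (ha : a r₀ ≠ 0)
    (hsum : ∀ T ∈ skewSubmodule n k, ∑ r, a r * coordFn n k (I r) (hI r) T = 0) :
    k + 2 ≤ m := by
  by_contra! hm
  have hcard : ((Finset.univ.erase r₀).image I).card ≤ k :=
    Finset.card_image_le.trans (by
      rw [Finset.card_erase_of_mem (Finset.mem_univ r₀), Finset.card_univ, Fintype.card_fin]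
      omega)
  have hr₀ : I r₀ ∉ (Finset.univ.erase r₀).image I := by
    simp [hinj.eq_iff]
  obtain ⟨T, hT, hTr₀, hTr⟩ := exists_mem_skewSubmodule_separating _ (hI r₀) _ hcard hr₀
  refine mul_ne_zero ha hTr₀ ?_
  rw [← hsum T hT, Finset.sum_eq_single r₀ (fun r _ hr => ?_) (by simp)]
  rw [hTr _ _ (Finset.mem_image_of_mem I (Finset.mem_erase.2 ⟨hr, Finset.mem_univ r⟩)), mul_zero]

end Skew

open Skew in
/-- for `k ≥ 2`, any nontrivial linear dependence among the
functionals `T ↦ (∂T)_I` (over distinct `(k+1)`-subsets `I`, with all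
coefficients nonzero) has length at least `4`; consequently any two of the
hyperplanes `{(∂T)_I = 0}` in `Λᵏ(ℂⁿ)` intersect in codimension `2` and no
third such hyperplane contains their intersection. -/
theorem hyperplanes_double_intersection {n k : ℕ} (hk : 2 ≤ k) :
    (∀ (m : ℕ) (a : Fin m → ℂ) (I : Fin m → Finset (Fin n))
        (hI : ∀ r, (I r).card = k + 1),
        m ≠ 0 → Function.Injective I → (∀ r, a r ≠ 0) →
        (∀ T ∈ skewSubmodule n k, ∑ r, a r * coordFn n k (I r) (hI r) T = 0) →
        4 ≤ m) ∧
    (∀ (s t u : Finset (Fin n)) (hs : s.card = k + 1) (ht : t.card = k + 1)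
        (hu : u.card = k + 1), s ≠ t → u ≠ s → u ≠ t →
        (Module.finrank ℂ
            ((skewSubmodule n k ⊓ LinearMap.ker (coordFn n k s hs)
              ⊓ LinearMap.ker (coordFn n k t ht) : Submodule ℂ ((Fin k → Fin n) → ℂ))) + 2
          = Module.finrank ℂ (skewSubmodule n k)) ∧
        ∃ T ∈ skewSubmodule n k ⊓ LinearMap.ker (coordFn n k s hs)
            ⊓ LinearMap.ker (coordFn n k t ht),
          coordFn n k u hu T ≠ 0) := by
  refine ⟨fun m a I hI hm hinj ha hsum => ?_, fun s t u hs ht hu hst hus hut => ?_⟩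
  · have := add_two_le_of_sum_coordFn_eq_zero a I hI hinj (ha ⟨0, Nat.pos_of_ne_zero hm⟩) hsum
    omega
  obtain ⟨x, hx, hsx, -⟩ := exists_mem_skewSubmodule_separating s hs ∅ (Nat.zero_le k) (by simp)
  obtain ⟨y, hy, hty, hsy⟩ := exists_mem_skewSubmodule_separating t ht {s}
    (by rw [Finset.card_singleton]; omega) (by simpa using hst.symm)
  obtain ⟨z, hz, huz, hstz⟩ := exists_mem_skewSubmodule_separating u hu {s, t}
    ((Finset.card_le_two).trans hk) (by simp [hus, hut])
  have hy' : y ∈ skewSubmodule n k ⊓ LinearMap.ker (coordFn n k s hs) :=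
    ⟨hy, hsy s hs (Finset.mem_singleton_self s)⟩
  refine ⟨?_, z, ⟨⟨hz, hstz s hs (by simp)⟩, hstz t ht (by simp)⟩, huz⟩
  rw [← Submodule.finrank_inf_ker_add_one hx hsx, ← Submodule.finrank_inf_ker_add_one hy' hty]
end
end
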